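/- arXiv:2503.23826 — 2 statements merged into one kernel-verified Lean document; each statement's English description precedes it below -/
import Mathlib

section
/- A trim WFA_if A over a finite alphabet is determinizable if and only if there exists a bound B ∈ ℕ such that for every word x ∈ Σ* and every state q ∈ Q: if there exists y ∈ Σ* such that mwt⁺ⁱᶠ_A(xy, Q₀→F) equals the minimum of wt⁺ⁱᶠ over runs on xy from Q₀ to F whose state after the prefix x is q, and this common value is finite, then mwt⁺ⁱ_A(x, Q₀→q) − mwt⁺ⁱ_A(x, Q₀→Q) ≤ B. -/
open scoped Classical

/-- `ℤ∞ = ℤ ∪ {∞}`. -/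
abbrev ZInf : Type := WithTop ℤ

/-- `mwt Δ w p q` is the minimal weight of a run of the WFA with transition weights `Δ`
on the word `w` from state `p` to state `q` (`⊤` if there is no such run). -/
noncomputable def mwt {Q A : Type*} [Fintype Q] (Δ : Q → A → Q → ZInf) :
    List A → Q → Q → ZInf
  | [], p, q => if p = q then 0 else ⊤
  | σ :: w, p, q => Finset.univ.inf fun t => Δ p σ t + mwt Δ w t q

/-- `wtW Δ q₀ w = mwt(w, q₀ → Q)`: the value that the WFA `(Δ, q₀)` assigns to the
word `w`. -/
noncomputable def wtW {Q A : Type*} [Fintype Q] (Δ : Q → A → Q → ZInf) (q₀ : Q)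
    (w : List A) : ZInf :=
  Finset.univ.inf fun q => mwt Δ w q₀ q

/-- A WFA is deterministic if from every state, on every letter, at most one transition has
finite weight. -/
def IsDet {Q A : Type*} (Δ : Q → A → Q → ZInf) : Prop :=
  ∀ p σ q q', Δ p σ q ≠ ⊤ → Δ p σ q' ≠ ⊤ → q = q'

/-- A WFA is determinizable if there is a deterministic WFA over the same alphabet that
computes the same function on words. -/
def Determinizable {Q A : Type*} [Fintype Q] (Δ : Q → A → Q → ZInf) (q₀ : Q) : Prop :=
  ∃ (Q' : Type) (inst : Fintype Q') (Δ' : Q' → A → Q' → ZInf) (q₀' : Q'),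
    IsDet Δ' ∧ ∀ w : List A, @wtW Q' A inst Δ' q₀' w = wtW Δ q₀ w

/-- The value `wt_A(w) = mwt⁺ⁱᶠ(w, Q₀ → F)` of a word in a WFA with initial weights `iw`
and final weights `fw`. -/
noncomputable def wtIF {Q A : Type*} [Fintype Q] (iw : Q → ZInf) (Δ : Q → A → Q → ZInf)
    (fw : Q → ZInf) (w : List A) : ZInf :=
  Finset.univ.inf fun p => Finset.univ.inf fun q => iw p + mwt Δ w p q + fw q

/-- `mwtI iw Δ x q = mwt⁺ⁱ(x, Q₀ → q)`: the minimum of `init(p) + wt(ρ)` over runs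
`ρ : p → q` on `x`. -/
noncomputable def mwtI {Q A : Type*} [Fintype Q] (iw : Q → ZInf) (Δ : Q → A → Q → ZInf)
    (x : List A) (q : Q) : ZInf :=
  Finset.univ.inf fun p => iw p + mwt Δ x p q

/-- `mwtIall iw Δ x = mwt⁺ⁱ(x, Q₀ → Q)`. -/
noncomputable def mwtIall {Q A : Type*} [Fintype Q] (iw : Q → ZInf) (Δ : Q → A → Q → ZInf)
    (x : List A) : ZInf :=
  Finset.univ.inf fun q => mwtI iw Δ x q

/-- `mwtF Δ fw y q = mwt⁺ᶠ(y, q → F)`: the minimum of `wt(ρ) + fin(r)` over runs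
`ρ : q → r` on `y`. -/
noncomputable def mwtF {Q A : Type*} [Fintype Q] (Δ : Q → A → Q → ZInf) (fw : Q → ZInf)
    (y : List A) (q : Q) : ZInf :=
  Finset.univ.inf fun r => mwt Δ y q r + fw r

/-- A WFA with initial and final weights is trim if every state is reachable from `Q₀` by
some run and has some run into `F`. -/
def TrimIF {Q A : Type*} [Fintype Q] (iw : Q → ZInf) (Δ : Q → A → Q → ZInf)
    (fw : Q → ZInf) : Prop :=
  ∀ q : Q, (∃ (p : Q) (w : List A), iw p ≠ ⊤ ∧ mwt Δ w p q ≠ ⊤) ∧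
    (∃ (r : Q) (w : List A), fw r ≠ ⊤ ∧ mwt Δ w q r ≠ ⊤)

/-- A WFA with initial and final weights is deterministic if exactly one state has finite
initial weight and from every state and letter at most one transition has finite weight. -/
def IsDetIF {Q A : Type*} (iw : Q → ZInf) (Δ : Q → A → Q → ZInf) : Prop :=
  (∃! q, iw q ≠ ⊤) ∧ IsDet Δ

/-- A WFA with initial and final weights is determinizable if a deterministic one computes
the same function on words. -/
def DeterminizableIF {Q A : Type*} [Fintype Q] (iw : Q → ZInf) (Δ : Q → A → Q → ZInf)
    (fw : Q → ZInf) : Prop :=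
  ∃ (Q' : Type) (inst : Fintype Q') (iw' : Q' → ZInf) (Δ' : Q' → A → Q' → ZInf)
    (fw' : Q' → ZInf),
    IsDetIF iw' Δ' ∧ ∀ w : List A, @wtIF Q' A inst iw' Δ' fw' w = wtIF iw Δ fw w


section Gen
variable {Q A : Type*} [Fintype Q]

lemma zinf_add_inf {ι : Type*} (x : ZInf) (s : Finset ι) (f : ι → ZInf) :
    x + s.inf f = s.inf fun i => x + f i := by
  induction s using Finset.cons_induction with
  | empty => simp
  | cons a s ha ih =>
    rw [Finset.inf_cons, Finset.inf_cons, ← ih]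
    exact (add_right_mono (a := x)).map_min

lemma zinf_inf_add {ι : Type*} (x : ZInf) (s : Finset ι) (f : ι → ZInf) :
    s.inf f + x = s.inf fun i => f i + x := by
  induction s using Finset.cons_induction with
  | empty => simp
  | cons a s ha ih =>
    rw [Finset.inf_cons, Finset.inf_cons, ← ih]
    exact (add_left_mono (a := x)).map_min

lemma inf_ite_zero_add (p : Q) (f : Q → ZInf) :
    (Finset.univ.inf fun q => (if p = q then (0:ZInf) else ⊤) + f q) = f p := by
  apply le_antisymm
  · exact le_trans (Finset.inf_le (Finset.mem_univ p)) (by simp)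
  · refine Finset.le_inf fun q _ => ?_
    by_cases h : p = q
    · subst h; simp
    · simp [h]

lemma inf_add_ite_zero (p : Q) (f : Q → ZInf) :
    (Finset.univ.inf fun q => f q + (if q = p then (0:ZInf) else ⊤)) = f p := by
  apply le_antisymm
  · exact le_trans (Finset.inf_le (Finset.mem_univ p)) (by simp)
  · refine Finset.le_inf fun q _ => ?_
    by_cases h : q = p
    · subst h; simp
    · simp [h]

lemma mwt_nil (Δ : Q → A → Q → ZInf) (p q : Q) :
    mwt Δ [] p q = if p = q then 0 else ⊤ := rfl

lemma mwt_cons (Δ : Q → A → Q → ZInf) (σ : A) (w : List A) (p q : Q) :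
    mwt Δ (σ :: w) p q = Finset.univ.inf fun t => Δ p σ t + mwt Δ w t q := rfl

lemma mwt_append (Δ : Q → A → Q → ZInf) (x y : List A) (p r : Q) :
    mwt Δ (x ++ y) p r = Finset.univ.inf fun q => mwt Δ x p q + mwt Δ y q r := by
  induction x generalizing p with
  | nil =>
    simp only [List.nil_append, mwt_nil]
    exact (inf_ite_zero_add p fun q => mwt Δ y q r).symm
  | cons σ x ih =>
    simp only [List.cons_append, mwt_cons]
    have l1 : (Finset.univ.inf fun t => Δ p σ t + mwt Δ (x ++ y) t r)
        = Finset.univ.inf fun t => Finset.univ.inf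
            fun q => Δ p σ t + (mwt Δ x t q + mwt Δ y q r) := by
      refine Finset.inf_congr rfl fun t _ => ?_
      rw [ih, zinf_add_inf]
    rw [l1, Finset.inf_comm]
    refine Finset.inf_congr rfl fun q _ => ?_
    rw [zinf_inf_add]
    exact Finset.inf_congr rfl fun t _ => by rw [add_assoc]

lemma mwt_single (Δ : Q → A → Q → ZInf) (σ : A) (q q' : Q) :
    mwt Δ [σ] q q' = Δ q σ q' := by
  rw [mwt_cons]
  exact inf_add_ite_zero q' fun t => Δ q σ t

lemma mwt_snoc (Δ : Q → A → Q → ZInf) (x : List A) (σ : A) (p q' : Q) :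
    mwt Δ (x ++ [σ]) p q' = Finset.univ.inf fun q => mwt Δ x p q + Δ q σ q' := by
  rw [mwt_append]
  exact Finset.inf_congr rfl fun q _ => by rw [mwt_single]

end Gen

section Gen2
variable {Q A : Type*} [Fintype Q]
variable (iw : Q → ZInf) (Δ : Q → A → Q → ZInf) (fw : Q → ZInf)

lemma zinf_ne_top_exists {x : ZInf} (h : x ≠ ⊤) : ∃ v : ℤ, x = ↑v := by
  rcases WithTop.ne_top_iff_exists.mp h with ⟨v, hv⟩
  exact ⟨v, hv.symm⟩

lemma mwtI_nil (q : Q) : mwtI iw Δ [] q = iw q := by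
  unfold mwtI
  simp only [mwt_nil]
  exact inf_add_ite_zero q iw
lemma mwtF_nil (q : Q) : mwtF Δ fw [] q = fw q := by
  unfold mwtF
  simp only [mwt_nil]
  exact inf_ite_zero_add q fw

lemma mwtI_snoc (x : List A) (σ : A) (q' : Q) :
    mwtI iw Δ (x ++ [σ]) q' = Finset.univ.inf fun q => mwtI iw Δ x q + Δ q σ q' := by
  unfold mwtI
  have l1 : (Finset.univ.inf fun p => iw p + mwt Δ (x ++ [σ]) p q')
      = Finset.univ.inf fun p => Finset.univ.inf
          fun q => iw p + mwt Δ x p q + Δ q σ q' := by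
    refine Finset.inf_congr rfl fun p _ => ?_
    rw [mwt_snoc, zinf_add_inf]
    exact Finset.inf_congr rfl fun q _ => by rw [add_assoc]
  rw [l1, Finset.inf_comm]
  exact Finset.inf_congr rfl fun q _ => (zinf_inf_add _ _ _).symm

lemma mwtF_cons (σ : A) (y : List A) (q : Q) :
    mwtF Δ fw (σ :: y) q = Finset.univ.inf fun t => Δ q σ t + mwtF Δ fw y t := by
  unfold mwtF
  have l1 : (Finset.univ.inf fun r => mwt Δ (σ :: y) q r + fw r)
      = Finset.univ.inf fun r => Finset.univ.inf
          fun t => Δ q σ t + mwt Δ y t r + fw r := by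
    refine Finset.inf_congr rfl fun r _ => ?_
    rw [mwt_cons, zinf_inf_add]
  rw [l1, Finset.inf_comm]
  refine Finset.inf_congr rfl fun t _ => ?_
  rw [zinf_add_inf]
  exact Finset.inf_congr rfl fun r _ => by rw [add_assoc]

lemma wtIF_split (x y : List A) :
    wtIF iw Δ fw (x ++ y) =
      Finset.univ.inf fun q => mwtI iw Δ x q + mwtF Δ fw y q := by
  unfold wtIF mwtI mwtF
  have l1 : (Finset.univ.inf fun p => Finset.univ.inf fun r => iw p + mwt Δ (x ++ y) p r + fw r)
      = Finset.univ.inf fun p => Finset.univ.inf fun r => Finset.univ.inf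
          fun q => (iw p + mwt Δ x p q) + (mwt Δ y q r + fw r) := by
    refine Finset.inf_congr rfl fun p _ => Finset.inf_congr rfl fun r _ => ?_
    rw [mwt_append, zinf_add_inf, zinf_inf_add]
    refine Finset.inf_congr rfl fun q _ => ?_
    rw [← add_assoc, add_assoc (iw p + mwt Δ x p q)]
  have l2 : (Finset.univ.inf fun p => Finset.univ.inf fun r => Finset.univ.inf
          fun q => (iw p + mwt Δ x p q) + (mwt Δ y q r + fw r))
      = Finset.univ.inf fun p => Finset.univ.inf fun q => Finset.univ.inf
          fun r => (iw p + mwt Δ x p q) + (mwt Δ y q r + fw r) := by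
    refine Finset.inf_congr rfl fun p _ => ?_
    exact Finset.inf_comm _ _ _
  rw [l1, l2, Finset.inf_comm]
  refine Finset.inf_congr rfl fun q _ => ?_
  rw [zinf_inf_add]
  exact Finset.inf_congr rfl fun p _ => (zinf_add_inf _ _ _).symm

lemma mwtF_nil_eq (q : Q) : mwtF Δ fw [] q = fw q := mwtF_nil Δ fw q

lemma wtIF_eq_inf_mwtI_fw (w : List A) :
    wtIF iw Δ fw w = Finset.univ.inf fun q => mwtI iw Δ w q + fw q := by
  have := wtIF_split iw Δ fw w []
  rw [List.append_nil] at this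
  rw [this]
  exact Finset.inf_congr rfl fun q _ => by rw [mwtF_nil]

lemma wtIF_le_split (x y : List A) (q : Q) :
    wtIF iw Δ fw (x ++ y) ≤ mwtI iw Δ x q + mwtF Δ fw y q := by
  rw [wtIF_split]
  exact Finset.inf_le (Finset.mem_univ q)

lemma mwtIall_le (x : List A) (q : Q) : mwtIall iw Δ x ≤ mwtI iw Δ x q :=
  Finset.inf_le (Finset.mem_univ q)

end Gen2

section Backward
variable {Q A : Type*} [Fintype Q]

/-- value of a truncated entry -/
noncomputable def valB (B : ℕ) : Option (Fin (B+1)) → ZInf :=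
  fun o => o.elim ⊤ (fun k => ((k.val : ℤ) : ZInf))

/-- truncation -/
noncomputable def trB (B : ℕ) (z : ZInf) (m : ℤ) : Option (Fin (B+1)) :=
  if h : ∃ v : ℤ, z = ↑v ∧ 0 ≤ v - m ∧ v - m ≤ B then
    some ⟨(h.choose - m).toNat, by
      have := h.choose_spec; omega⟩
  else none

lemma trB_le (B : ℕ) (z : ZInf) (m : ℤ) : z ≤ ↑m + valB B (trB B z m) := by
  unfold trB
  split
  · next h =>
    have hs := h.choose_spec
    simp only [valB, Option.elim]
    have key : (↑m + ↑(((h.choose - m).toNat : ℕ) : ℤ) : ZInf) = ↑h.choose := by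
      rw [Int.toNat_of_nonneg hs.2.1, ← WithTop.coe_add, WithTop.coe_inj]; ring
    exact le_of_eq (hs.1.trans key.symm)
  · next h => simp [valB]

lemma trB_eq (B : ℕ) (v m : ℤ) (h1 : 0 ≤ v - m) (h2 : v - m ≤ B) :
    (↑m : ZInf) + valB B (trB B ((v : ZInf)) m) = ↑v := by
  unfold trB
  have hex : ∃ w : ℤ, ((v : ZInf)) = ↑w ∧ 0 ≤ w - m ∧ w - m ≤ B := ⟨v, rfl, h1, h2⟩
  rw [dif_pos hex]
  have hcv : hex.choose = v := by exact_mod_cast hex.choose_spec.1.symm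
  simp only [valB, Option.elim]
  rw [hcv, Int.toNat_of_nonneg h1, ← WithTop.coe_add, WithTop.coe_inj]
  ring


variable (Δ : Q → A → Q → ZInf) (B : ℕ)

noncomputable def hfunB (g : Q → Option (Fin (B+1))) (σ : A) (q' : Q) : ZInf :=
  Finset.univ.inf fun p => valB B (g p) + Δ p σ q'

noncomputable def mzB (g : Q → Option (Fin (B+1))) (σ : A) : ZInf :=
  Finset.univ.inf (hfunB Δ B g σ)

noncomputable def dstep (g : Q → Option (Fin (B+1))) (σ : A) : Q → Option (Fin (B+1)) :=
  fun q' => trB B (hfunB Δ B g σ q') (WithTop.untopD 0 (mzB Δ B g σ))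

noncomputable def drun : (Q → Option (Fin (B+1))) → List A → (Q → Option (Fin (B+1)))
  | g, [] => g
  | g, σ :: w => drun (dstep Δ B g σ) w

noncomputable def dwsum : (Q → Option (Fin (B+1))) → List A → ZInf
  | _, [] => 0
  | g, σ :: w => mzB Δ B g σ + dwsum (dstep Δ B g σ) w

lemma drun_snoc (g : Q → Option (Fin (B+1))) (x : List A) (σ : A) :
    drun Δ B g (x ++ [σ]) = dstep Δ B (drun Δ B g x) σ := by
  induction x generalizing g with
  | nil => rfl
  | cons τ x ih => simp only [List.cons_append, drun]; exact ih _

lemma dwsum_snoc (g : Q → Option (Fin (B+1))) (x : List A) (σ : A) :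
    dwsum Δ B g (x ++ [σ]) = dwsum Δ B g x + mzB Δ B (drun Δ B g x) σ := by
  induction x generalizing g with
  | nil => simp [dwsum, drun]
  | cons τ x ih =>
    simp only [List.cons_append, dwsum, drun]
    rw [ih, add_assoc]

lemma mzB_le (g : Q → Option (Fin (B+1))) (σ : A) (q' : Q) :
    mzB Δ B g σ ≤ hfunB Δ B g σ q' := Finset.inf_le (Finset.mem_univ q')

lemma hfunB_le (g : Q → Option (Fin (B+1))) (σ : A) (p q' : Q) :
    hfunB Δ B g σ q' ≤ valB B (g p) + Δ p σ q' := Finset.inf_le (Finset.mem_univ p)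

lemma hfunB_le_step (g : Q → Option (Fin (B+1))) (σ : A) (q' : Q) :
    hfunB Δ B g σ q' ≤ mzB Δ B g σ + valB B (dstep Δ B g σ q') := by
  rcases eq_or_ne (mzB Δ B g σ) ⊤ with h | h
  · rw [h, top_add]; exact le_top
  · obtain ⟨m, hm⟩ := zinf_ne_top_exists h
    have h2 := trB_le B (hfunB Δ B g σ q') m
    rw [hm]
    unfold dstep
    rw [hm, WithTop.untopD_coe]
    exact h2


noncomputable def g0B (iw : Q → ZInf) (mv : ℤ) : Q → Option (Fin (B+1)) :=
  fun q => trB B (iw q) mv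

lemma lemA (iw : Q → ZInf) (mv : ℤ) (x : List A) :
    ∀ q, mwtI iw Δ x q ≤
      ↑mv + (dwsum Δ B (g0B B iw mv) x + valB B (drun Δ B (g0B B iw mv) x q)) := by
  induction x using List.reverseRecOn with
  | nil =>
    intro q
    rw [mwtI_nil]
    simp only [dwsum, drun, zero_add]
    exact trB_le B (iw q) mv
  | append_singleton x σ ih =>
    intro q'
    rw [mwtI_snoc, drun_snoc, dwsum_snoc]
    set Gx := drun Δ B (g0B B iw mv) x with hGx
    have h1 : (Finset.univ.inf fun q => mwtI iw Δ x q + Δ q σ q')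
        ≤ Finset.univ.inf fun q =>
            (↑mv + (dwsum Δ B (g0B B iw mv) x + valB B (Gx q))) + Δ q σ q' := by
      refine Finset.inf_mono_fun fun q _ => add_le_add_left (ih q) _
    have h2 : (Finset.univ.inf fun q =>
            (↑mv + (dwsum Δ B (g0B B iw mv) x + valB B (Gx q))) + Δ q σ q')
        = (↑mv + dwsum Δ B (g0B B iw mv) x) + hfunB Δ B Gx σ q' := by
      unfold hfunB
      rw [zinf_add_inf]
      refine Finset.inf_congr rfl fun q _ => ?_
      rw [← add_assoc, ← add_assoc]
    refine le_trans (le_trans h1 (le_of_eq h2)) ?_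
    calc (↑mv + dwsum Δ B (g0B B iw mv) x) + hfunB Δ B Gx σ q'
        ≤ (↑mv + dwsum Δ B (g0B B iw mv) x)
            + (mzB Δ B Gx σ + valB B (dstep Δ B Gx σ q')) := by
          exact add_le_add_right (hfunB_le_step Δ B Gx σ q') _
      _ = ↑mv + (dwsum Δ B (g0B B iw mv) x + mzB Δ B Gx σ + valB B (dstep Δ B Gx σ q')) := by
          rw [add_assoc, ← add_assoc (dwsum Δ B (g0B B iw mv) x)]


lemma mwtIall_nil (iw : Q → ZInf) : mwtIall iw Δ [] = Finset.univ.inf iw := by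
  unfold mwtIall
  exact Finset.inf_congr rfl fun q _ => mwtI_nil iw Δ q

lemma lemB (iw : Q → ZInf) (fw : Q → ZInf) (mv : ℤ)
    (hmv : Finset.univ.inf iw = (mv : ZInf))
    (hB : ∀ (x : List A) (q : Q),
      (∃ y, wtIF iw Δ fw (x ++ y) = mwtI iw Δ x q + mwtF Δ fw y q ∧
        wtIF iw Δ fw (x ++ y) ≠ ⊤) →
      mwtI iw Δ x q ≤ mwtIall iw Δ x + (B : ZInf)) :
    ∀ (x : List A) (q : Q) (y : List A),
      wtIF iw Δ fw (x ++ y) = mwtI iw Δ x q + mwtF Δ fw y q →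
      wtIF iw Δ fw (x ++ y) ≠ ⊤ →
      ↑mv + (dwsum Δ B (g0B B iw mv) x + valB B (drun Δ B (g0B B iw mv) x q))
        = mwtI iw Δ x q := by
  intro x
  induction x using List.reverseRecOn with
  | nil =>
    intro q y hopt hfin
    rw [List.nil_append] at hopt hfin
    have hne : mwtI iw Δ [] q + mwtF Δ fw y q ≠ ⊤ := hopt ▸ hfin
    have hiw : iw q ≠ ⊤ := by
      have := (WithTop.add_ne_top.mp hne).1
      rwa [mwtI_nil] at this
    obtain ⟨v, hv⟩ := zinf_ne_top_exists hiw
    have hub := hB [] q ⟨y, by rw [List.nil_append]; exact hopt,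
      by rw [List.nil_append]; exact hfin⟩
    rw [mwtI_nil, mwtIall_nil, hmv, hv] at hub
    have hub' : v ≤ mv + (B : ℤ) := by exact_mod_cast hub
    have hlb : (mv : ZInf) ≤ (v : ZInf) := by rw [← hmv, ← hv]; exact Finset.inf_le (Finset.mem_univ q)
    have hlb' : mv ≤ v := by exact_mod_cast hlb
    simp only [dwsum, drun, zero_add]
    unfold g0B
    rw [mwtI_nil, hv]
    exact trB_eq B v mv (by omega) (by omega)
  | append_singleton x σ ih =>
    intro q' y hopt hfin
    have happ : (x ++ [σ]) ++ y = x ++ (σ :: y) := by simp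
    have hne : mwtI iw Δ (x ++ [σ]) q' + mwtF Δ fw y q' ≠ ⊤ := hopt ▸ hfin
    obtain ⟨hI, hF⟩ := WithTop.add_ne_top.mp hne
    have hQne : Nonempty Q := ⟨q'⟩
    obtain ⟨p, -, hp⟩ := Finset.exists_mem_eq_inf Finset.univ Finset.univ_nonempty
      (fun q => mwtI iw Δ x q + Δ q σ q')
    have hsnoc : mwtI iw Δ (x ++ [σ]) q' = mwtI iw Δ x p + Δ p σ q' := by
      rw [mwtI_snoc]; exact hp
    have hIp := WithTop.add_ne_top.mp (hsnoc ▸ hI)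
    have hopt' : wtIF iw Δ fw (x ++ (σ :: y)) = mwtI iw Δ x p + mwtF Δ fw (σ :: y) p := by
      refine le_antisymm (wtIF_le_split _ _ _ _ _ _) ?_
      have hst : mwtI iw Δ x p + mwtF Δ fw (σ :: y) p
          ≤ mwtI iw Δ x p + (Δ p σ q' + mwtF Δ fw y q') :=
        add_le_add_right (by rw [mwtF_cons]; exact Finset.inf_le (Finset.mem_univ q')) _
      refine le_trans hst (le_of_eq ?_)
      rw [← add_assoc, ← hsnoc, ← hopt, happ]
    have hfin' : wtIF iw Δ fw (x ++ (σ :: y)) ≠ ⊤ := by rw [← happ]; exact hfin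
    have hIH := ih p (σ :: y) hopt' hfin'
    obtain ⟨a0, ha0⟩ := zinf_ne_top_exists hIp.1
    obtain ⟨dd, hdd⟩ := zinf_ne_top_exists hIp.2
    set Gx := drun Δ B (g0B B iw mv) x with hGx
    set W := dwsum Δ B (g0B B iw mv) x with hW
    have hWv : W + valB B (Gx p) ≠ ⊤ := by
      intro h
      rw [h, add_top, ha0] at hIH
      exact WithTop.coe_ne_top hIH.symm
    obtain ⟨hWne, hvpne⟩ := WithTop.add_ne_top.mp hWv
    obtain ⟨ws, hws⟩ := zinf_ne_top_exists hWne
    obtain ⟨vp, hvp⟩ := zinf_ne_top_exists hvpne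
    have h1b : ∀ q'', mwtI iw Δ (x ++ [σ]) q'' ≤ (↑mv + W) + hfunB Δ B Gx σ q'' := by
      intro q''
      rw [mwtI_snoc]
      have hdist : (↑mv + W) + hfunB Δ B Gx σ q''
          = Finset.univ.inf fun q => (↑mv + (W + valB B (Gx q))) + Δ q σ q'' := by
        unfold hfunB
        rw [zinf_add_inf]
        exact Finset.inf_congr rfl fun q _ => by rw [← add_assoc, ← add_assoc]
      rw [hdist]
      exact Finset.inf_mono_fun fun q _ => add_le_add_left (lemA Δ B iw mv x q) _
    have hhq_le : hfunB Δ B Gx σ q' ≤ (↑vp : ZInf) + ↑dd := by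
      have := hfunB_le Δ B Gx σ p q'
      rwa [hvp, hdd] at this
    obtain ⟨hq, hhq⟩ := zinf_ne_top_exists
      (ne_top_of_le_ne_top (by rw [← WithTop.coe_add]; exact WithTop.coe_ne_top) hhq_le)
    obtain ⟨mb, hmb⟩ := zinf_ne_top_exists
      (ne_top_of_le_ne_top (hhq ▸ WithTop.coe_ne_top) (mzB_le Δ B Gx σ q'))
    have hq_ge : mb ≤ hq := by
      have := mzB_le Δ B Gx σ q'
      rw [hmb, hhq] at this
      exact_mod_cast this
    obtain ⟨q2, -, hq2⟩ := Finset.exists_mem_eq_inf Finset.univ Finset.univ_nonempty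
      (hfunB Δ B Gx σ)
    have h2 : mwtIall iw Δ (x ++ [σ]) ≤ (↑mv + W) + mzB Δ B Gx σ := by
      refine le_trans (mwtIall_le iw Δ _ q2) ?_
      rw [show mzB Δ B Gx σ = hfunB Δ B Gx σ q2 from hq2]
      exact h1b q2
    have hE2 : (↑mv + W) + hfunB Δ B Gx σ q' = mwtI iw Δ (x ++ [σ]) q' := by
      refine le_antisymm ?_ (h1b q')
      calc (↑mv + W) + hfunB Δ B Gx σ q'
          ≤ (↑mv + W) + (valB B (Gx p) + Δ p σ q') :=
            add_le_add_right (hfunB_le Δ B Gx σ p q') _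
        _ = (↑mv + (W + valB B (Gx p))) + Δ p σ q' := by
            rw [← add_assoc, add_assoc (↑mv : ZInf) W]
        _ = mwtI iw Δ x p + Δ p σ q' := by rw [hIH]
        _ = mwtI iw Δ (x ++ [σ]) q' := hsnoc.symm
    have hub := hB (x ++ [σ]) q' ⟨y, hopt, hfin⟩
    have e1 : mv + ws + hq = a0 + dd := by
      have := hE2
      rw [hws, hhq, hsnoc, ha0, hdd, ← WithTop.coe_add, ← WithTop.coe_add,
        ← WithTop.coe_add] at this
      exact_mod_cast this
    have e2 : a0 + dd ≤ mv + ws + mb + (B : ℤ) := by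
      have hcomb := le_trans hub (add_le_add_left h2 ((B : ZInf)))
      rw [hsnoc, ha0, hdd, hws, hmb, ← WithTop.coe_add, ← WithTop.coe_add,
        ← WithTop.coe_add] at hcomb
      exact_mod_cast hcomb
    rw [drun_snoc, dwsum_snoc, ← hGx, ← hW, hsnoc, ha0, hdd]
    unfold dstep
    rw [hhq, hmb, WithTop.untopD_coe, hws]
    have htr := trB_eq B hq mb (by omega) (by omega)
    rw [add_assoc, htr, ← WithTop.coe_add, ← WithTop.coe_add,
      ← WithTop.coe_add, WithTop.coe_inj]
    omega


noncomputable def DetΔ : (Q → Option (Fin (B+1))) → A → (Q → Option (Fin (B+1))) → ZInf :=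
  fun g σ g' => if g' = dstep Δ B g σ then mzB Δ B g σ else ⊤

noncomputable def DetIw (iw : Q → ZInf) (mv : ℤ) : (Q → Option (Fin (B+1))) → ZInf :=
  fun g => if g = g0B B iw mv then ((mv : ZInf)) else ⊤

noncomputable def DetFw (fw : Q → ZInf) : (Q → Option (Fin (B+1))) → ZInf :=
  fun g => Finset.univ.inf fun q => valB B (g q) + fw q

lemma det_mwt : ∀ (w : List A) (g g'' : Q → Option (Fin (B+1))),
    mwt (DetΔ Δ B) w g g'' = if g'' = drun Δ B g w then dwsum Δ B g w else ⊤ := by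
  intro w
  induction w with
  | nil =>
    intro g g''
    rw [mwt_nil]
    simp only [drun, dwsum]
    rcases eq_or_ne g g'' with h | h
    · simp [h]
    · simp [h, h.symm]
  | cons σ w ih =>
    intro g g''
    rw [mwt_cons]
    have hcol : (Finset.univ.inf fun t => DetΔ Δ B g σ t + mwt (DetΔ Δ B) w t g'')
        = mzB Δ B g σ + mwt (DetΔ Δ B) w (dstep Δ B g σ) g'' := by
      refine le_antisymm ?_ ?_
      · refine le_trans (Finset.inf_le (Finset.mem_univ (dstep Δ B g σ))) ?_
        rw [DetΔ, if_pos rfl]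
      · refine Finset.le_inf fun t _ => ?_
        rcases eq_or_ne t (dstep Δ B g σ) with h | h
        · subst h; rw [DetΔ, if_pos rfl]
        · rw [DetΔ, if_neg h, top_add]; exact le_top
    rw [hcol, ih]
    simp only [drun, dwsum]
    rcases eq_or_ne g'' (drun Δ B (dstep Δ B g σ) w) with h | h
    · simp [h]
    · simp [h, add_top]

lemma det_wtIF (iw fw : Q → ZInf) (mv : ℤ) (w : List A) :
    wtIF (DetIw B iw mv) (DetΔ Δ B) (DetFw B fw) w
      = ↑mv + (dwsum Δ B (g0B B iw mv) w
          + DetFw B fw (drun Δ B (g0B B iw mv) w)) := by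
  unfold wtIF
  have step1 : (Finset.univ.inf fun p => Finset.univ.inf fun r =>
        DetIw B iw mv p + mwt (DetΔ Δ B) w p r + DetFw B fw r)
      = Finset.univ.inf fun r =>
          ↑mv + mwt (DetΔ Δ B) w (g0B B iw mv) r + DetFw B fw r := by
    refine le_antisymm ?_ ?_
    · refine le_trans (Finset.inf_le (Finset.mem_univ (g0B B iw mv))) ?_
      refine Finset.inf_mono_fun fun r _ => ?_
      rw [DetIw, if_pos rfl]
    · refine Finset.le_inf fun p _ => Finset.le_inf fun r _ => ?_
      rcases eq_or_ne p (g0B B iw mv) with h | h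
      · subst h
        rw [DetIw, if_pos rfl]
        exact Finset.inf_le (Finset.mem_univ r)
      · rw [DetIw, if_neg h, top_add, top_add]; exact le_top
  rw [step1]
  have step2 : (Finset.univ.inf fun r =>
        ↑mv + mwt (DetΔ Δ B) w (g0B B iw mv) r + DetFw B fw r)
      = ↑mv + dwsum Δ B (g0B B iw mv) w
          + DetFw B fw (drun Δ B (g0B B iw mv) w) := by
    refine le_antisymm ?_ ?_
    · refine le_trans (Finset.inf_le (Finset.mem_univ (drun Δ B (g0B B iw mv) w))) ?_
      rw [det_mwt, if_pos rfl]
    · refine Finset.le_inf fun r _ => ?_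
      rcases eq_or_ne r (drun Δ B (g0B B iw mv) w) with h | h
      · subst h; rw [det_mwt, if_pos rfl]
      · rw [det_mwt, if_neg h, add_top, top_add]; exact le_top
  rw [step2, add_assoc]

lemma backward_values (iw fw : Q → ZInf) (mv : ℤ)
    (hmv : Finset.univ.inf iw = (mv : ZInf))
    (hB : ∀ (x : List A) (q : Q),
      (∃ y, wtIF iw Δ fw (x ++ y) = mwtI iw Δ x q + mwtF Δ fw y q ∧
        wtIF iw Δ fw (x ++ y) ≠ ⊤) →
      mwtI iw Δ x q ≤ mwtIall iw Δ x + (B : ZInf)) (w : List A) :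
    wtIF (DetIw B iw mv) (DetΔ Δ B) (DetFw B fw) w = wtIF iw Δ fw w := by
  rw [det_wtIF]
  refine le_antisymm ?_ ?_
  · rcases eq_or_ne (wtIF iw Δ fw w) ⊤ with h | h
    · rw [h]; exact le_top
    · have hQne : Nonempty Q := by
        rcases isEmpty_or_nonempty Q with hE | hN
        · exfalso; apply h; unfold wtIF; rw [Finset.univ_eq_empty, Finset.inf_empty]
        · exact hN
      obtain ⟨q1, -, hq1⟩ := Finset.exists_mem_eq_inf Finset.univ Finset.univ_nonempty
        (fun q => mwtI iw Δ w q + fw q)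
      have hval : wtIF iw Δ fw w = mwtI iw Δ w q1 + fw q1 := by
        rw [wtIF_eq_inf_mwtI_fw]; exact hq1
      have hopt : wtIF iw Δ fw (w ++ []) = mwtI iw Δ w q1 + mwtF Δ fw [] q1 := by
        rw [List.append_nil, mwtF_nil]; exact hval
      have hfin : wtIF iw Δ fw (w ++ []) ≠ ⊤ := by rw [List.append_nil]; exact h
      have hIH := lemB Δ B iw fw mv hmv hB w q1 [] hopt hfin
      calc ↑mv + (dwsum Δ B (g0B B iw mv) w + DetFw B fw (drun Δ B (g0B B iw mv) w))
          ≤ ↑mv + (dwsum Δ B (g0B B iw mv) w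
              + (valB B (drun Δ B (g0B B iw mv) w q1) + fw q1)) := by
            exact add_le_add_right (add_le_add_right (Finset.inf_le (Finset.mem_univ q1)) _) _
        _ = (↑mv + (dwsum Δ B (g0B B iw mv) w + valB B (drun Δ B (g0B B iw mv) w q1)))
              + fw q1 := by rw [add_assoc, add_assoc]
        _ = mwtI iw Δ w q1 + fw q1 := by rw [hIH]
        _ = wtIF iw Δ fw w := hval.symm
  · rw [wtIF_eq_inf_mwtI_fw]
    have hdist : ↑mv + (dwsum Δ B (g0B B iw mv) w
          + DetFw B fw (drun Δ B (g0B B iw mv) w))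
        = Finset.univ.inf fun q =>
            (↑mv + (dwsum Δ B (g0B B iw mv) w
              + valB B (drun Δ B (g0B B iw mv) w q))) + fw q := by
      unfold DetFw
      rw [zinf_add_inf, zinf_add_inf]
      refine Finset.inf_congr rfl fun q _ => ?_
      rw [← add_assoc, ← add_assoc, add_assoc ((mv : ℤ) : ZInf)]
    rw [hdist]
    exact Finset.inf_mono_fun fun q _ => add_le_add_left (lemA Δ B iw mv w q) _

lemma detIF_det (iw : Q → ZInf) (mv : ℤ) :
    IsDetIF (DetIw B iw mv) (DetΔ Δ B) := by
  constructor
  · refine ⟨g0B B iw mv, ?_, ?_⟩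
    · simp only [DetIw, if_pos rfl]; exact WithTop.coe_ne_top
    · intro g hg
      by_contra hne
      unfold DetIw at hg; rw [if_neg hne] at hg
      exact hg rfl
  · intro g σ g1 g2 h1 h2
    have e1 : g1 = dstep Δ B g σ := by
      by_contra hne; unfold DetΔ at h1; rw [if_neg hne] at h1; exact h1 rfl
    have e2 : g2 = dstep Δ B g σ := by
      by_contra hne; unfold DetΔ at h2; rw [if_neg hne] at h2; exact h2 rfl
    rw [e1, e2]

end Backward

section Reindex
variable {Q A : Type*} [Fintype Q]

lemma inf_equiv {Q2 : Type*} [Fintype Q2] (e : Q2 ≃ Q) (f : Q → ZInf) :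
    (Finset.univ.inf fun c => f (e c)) = Finset.univ.inf f := by
  refine le_antisymm (Finset.le_inf fun b _ => ?_) (Finset.le_inf fun c _ => ?_)
  · exact le_trans (Finset.inf_le (Finset.mem_univ (e.symm b))) (by simp)
  · exact Finset.inf_le (Finset.mem_univ (e c))

lemma mwt_reindex {Q2 : Type*} [Fintype Q2] (e : Q2 ≃ Q) (Δ1 : Q → A → Q → ZInf) :
    ∀ (w : List A) (a b : Q2),
      mwt (fun a σ b => Δ1 (e a) σ (e b)) w a b = mwt Δ1 w (e a) (e b) := by
  intro w
  induction w with
  | nil =>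
    intro a b
    rw [mwt_nil, mwt_nil]
    rcases eq_or_ne a b with h | h
    · simp [h]
    · simp [h, fun hh => h (e.injective hh)]
  | cons σ w ih =>
    intro a b
    rw [mwt_cons, mwt_cons]
    rw [← inf_equiv e (fun t => Δ1 (e a) σ t + mwt Δ1 w t (e b))]
    exact Finset.inf_congr rfl fun t _ => by rw [ih]

lemma wtIF_reindex {Q2 : Type*} [Fintype Q2] (e : Q2 ≃ Q)
    (iw : Q → ZInf) (Δ1 : Q → A → Q → ZInf) (fw : Q → ZInf) (w : List A) :
    wtIF (fun a => iw (e a)) (fun a σ b => Δ1 (e a) σ (e b)) (fun a => fw (e a)) w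
      = wtIF iw Δ1 fw w := by
  unfold wtIF
  rw [← inf_equiv e (fun p => Finset.univ.inf fun q => iw p + mwt Δ1 w p q + fw q)]
  refine Finset.inf_congr rfl fun p _ => ?_
  rw [← inf_equiv e (fun q => iw (e p) + mwt Δ1 w (e p) q + fw q)]
  exact Finset.inf_congr rfl fun q _ => by rw [mwt_reindex]

/-- transport DeterminizableIF witnesses down to `Type 0` -/
lemma determinizableIF_of_witness {A : Type*} {Q : Type*} [Fintype Q]
    (iw : Q → ZInf) (Δ : Q → A → Q → ZInf) (fw : Q → ZInf)
    {Q1 : Type*} [Fintype Q1] (iw1 : Q1 → ZInf) (Δ1 : Q1 → A → Q1 → ZInf)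
    (fw1 : Q1 → ZInf) (hdet : IsDetIF iw1 Δ1)
    (hval : ∀ w : List A, wtIF iw1 Δ1 fw1 w = wtIF iw Δ fw w) :
    DeterminizableIF iw Δ fw := by
  let n := Fintype.card Q1
  let e : Fin n ≃ Q1 := (Fintype.equivFin Q1).symm
  refine ⟨Fin n, inferInstance, fun a => iw1 (e a), fun a σ b => Δ1 (e a) σ (e b),
    fun a => fw1 (e a), ⟨?_, ?_⟩, fun w => by rw [wtIF_reindex e]; exact hval w⟩
  · obtain ⟨q1, hq1, huniq⟩ := hdet.1
    refine ⟨e.symm q1, by simpa using hq1, fun g hg => ?_⟩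
    have := huniq (e g) hg
    rw [← this]; simp
  · intro p σ q q' h1 h2
    exact e.injective (hdet.2 (e p) σ (e q) (e q') h1 h2)

lemma determinizable_trivial {A : Type*} (iw : Q → ZInf) (Δ : Q → A → Q → ZInf)
    (fw : Q → ZInf) (h : ∀ q, iw q = ⊤) : DeterminizableIF iw Δ fw := by
  refine ⟨Fin 1, inferInstance, fun _ => 0, fun _ _ _ => ⊤, fun _ => ⊤,
    ⟨⟨0, by simp, fun y _ => Subsingleton.elim _ _⟩,
      fun p σ q q' _ _ => Subsingleton.elim _ _⟩, fun w => ?_⟩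
  have h1 : wtIF (fun _ : Fin 1 => (0 : ZInf)) (fun _ _ _ => ⊤) (fun _ => ⊤) w = ⊤ := by
    unfold wtIF
    rw [Finset.inf_eq_top_iff]
    intro p _
    rw [Finset.inf_eq_top_iff]
    intro q _
    rw [add_top]
  have h2 : wtIF iw Δ fw w = ⊤ := by
    unfold wtIF
    rw [Finset.inf_eq_top_iff]
    intro p _
    rw [Finset.inf_eq_top_iff]
    intro q _
    rw [h p, top_add, top_add]
  rw [h1, h2]

end Reindex

lemma backward_direction {Q A : Type*} [Fintype Q]
    (iw : Q → ZInf) (Δ : Q → A → Q → ZInf) (fw : Q → ZInf) (B : ℕ)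
    (hB : ∀ (x : List A) (q : Q),
      (∃ y, wtIF iw Δ fw (x ++ y) = mwtI iw Δ x q + mwtF Δ fw y q ∧
        wtIF iw Δ fw (x ++ y) ≠ ⊤) →
      mwtI iw Δ x q ≤ mwtIall iw Δ x + (B : ZInf)) :
    DeterminizableIF iw Δ fw := by
  rcases eq_or_ne (Finset.univ.inf iw) ⊤ with h | h
  · exact determinizable_trivial iw Δ fw fun q =>
      (Finset.inf_eq_top_iff _ _).mp h q (Finset.mem_univ q)
  · obtain ⟨mv, hmv⟩ := zinf_ne_top_exists h
    exact determinizableIF_of_witness iw Δ fw (DetIw B iw mv) (DetΔ Δ B) (DetFw B fw)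
      (detIF_det Δ B iw mv) (backward_values Δ B iw fw mv hmv hB)

section Forward
variable {Q A Q' : Type*} [Fintype Q] [Fintype Q']

lemma mwtI_det_unique (iw' : Q' → ZInf) (Δ' : Q' → A → Q' → ZInf)
    (hdet : IsDetIF iw' Δ') :
    ∀ (x : List A) (q1 q2 : Q'),
      mwtI iw' Δ' x q1 ≠ ⊤ → mwtI iw' Δ' x q2 ≠ ⊤ → q1 = q2 := by
  intro x
  induction x using List.reverseRecOn with
  | nil =>
    intro q1 q2 h1 h2
    rw [mwtI_nil] at h1 h2
    obtain ⟨q0, -, hu⟩ := hdet.1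
    rw [hu q1 h1, hu q2 h2]
  | append_singleton x σ ih =>
    intro q1 q2 h1 h2
    rw [mwtI_snoc] at h1 h2
    have h1' : ∃ p, mwtI iw' Δ' x p + Δ' p σ q1 ≠ ⊤ := by
      by_contra hc; push_neg at hc
      exact h1 ((Finset.inf_eq_top_iff _ _).mpr fun p _ => hc p)
    have h2' : ∃ p, mwtI iw' Δ' x p + Δ' p σ q2 ≠ ⊤ := by
      by_contra hc; push_neg at hc
      exact h2 ((Finset.inf_eq_top_iff _ _).mpr fun p _ => hc p)
    obtain ⟨p1, hp1⟩ := h1'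
    obtain ⟨p2, hp2⟩ := h2'
    obtain ⟨hI1, hT1⟩ := WithTop.add_ne_top.mp hp1
    obtain ⟨hI2, hT2⟩ := WithTop.add_ne_top.mp hp2
    have hpp : p1 = p2 := ih p1 p2 hI1 hI2
    subst hpp
    exact hdet.2 p1 σ q1 q2 hT1 hT2

lemma forward_direction (iw : Q → ZInf) (Δ : Q → A → Q → ZInf) (fw : Q → ZInf)
    (htrim : TrimIF iw Δ fw)
    (iw' : Q' → ZInf) (Δ' : Q' → A → Q' → ZInf) (fw' : Q' → ZInf)
    (hdet : IsDetIF iw' Δ')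
    (hval : ∀ w : List A, wtIF iw' Δ' fw' w = wtIF iw Δ fw w) :
    ∃ B : ℕ, ∀ (x : List A) (q : Q),
      (∃ y : List A,
          wtIF iw Δ fw (x ++ y) = mwtI iw Δ x q + mwtF Δ fw y q ∧
          wtIF iw Δ fw (x ++ y) ≠ ⊤) →
      mwtI iw Δ x q ≤ mwtIall iw Δ x + (B : ZInf) := by
  rcases isEmpty_or_nonempty Q with hE | hQne
  · exact ⟨0, fun x q => (hE.elim q)⟩
  have hQ'ne : Nonempty Q' := ⟨hdet.1.choose⟩
  -- the deterministic state reached on x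
  let d : List A → Q' := fun x =>
    if h : ∃ g, mwtI iw' Δ' x g ≠ ⊤ then h.choose else Classical.arbitrary Q'
  have hD2 : ∀ x y : List A,
      wtIF iw Δ fw (x ++ y) = mwtI iw' Δ' x (d x) + mwtF Δ' fw' y (d x) := by
    intro x y
    rw [← hval (x ++ y), wtIF_split]
    by_cases h : ∃ g, mwtI iw' Δ' x g ≠ ⊤
    · have hdx : d x = h.choose := dif_pos h
      refine le_antisymm (Finset.inf_le (Finset.mem_univ (d x)))
        (Finset.le_inf fun g _ => ?_)
      rcases eq_or_ne g (d x) with hg | hg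
      · rw [hg]
      · have hgt : mwtI iw' Δ' x g = ⊤ := by
          by_contra hne
          exact hg (by rw [hdx]; exact mwtI_det_unique iw' Δ' hdet x g h.choose hne h.choose_spec)
        rw [hgt, top_add]; exact le_top
    · push_neg at h
      have hL : (Finset.univ.inf fun g => mwtI iw' Δ' x g + mwtF Δ' fw' y g) = ⊤ :=
        (Finset.inf_eq_top_iff _ _).mpr fun g _ => by rw [h g, top_add]
      rw [hL, h (d x), top_add]
  -- trimness: a coreachability witness for each state
  have hyfin : ∀ r : Q, ∃ y, mwtF Δ fw y r ≠ ⊤ := by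
    intro r
    obtain ⟨r', w, hfw, hmw⟩ := (htrim r).2
    exact ⟨w, ne_top_of_le_ne_top (WithTop.add_ne_top.mpr ⟨hmw, hfw⟩)
      (Finset.inf_le (Finset.mem_univ r'))⟩
  choose yfin hyfinspec using hyfin
  choose Mf hMf using fun r => zinf_ne_top_exists (hyfinspec r)
  set M : ℤ := Finset.univ.sup' Finset.univ_nonempty Mf with hMdef
  have hM : ∀ r, mwtF Δ fw (yfin r) r ≤ (M : ZInf) := fun r => by
    rw [hMf r]
    exact WithTop.coe_le_coe.mpr (Finset.le_sup' Mf (Finset.mem_univ r))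
  set L : Q' → ZInf := fun g => Finset.univ.inf fun r : Q => mwtF Δ' fw' (yfin r) g
    with hLdef
  -- the key exchange inequality
  have hkey : ∀ (x y x0 y0 : List A) (q : Q), d x0 = d x →
      wtIF iw Δ fw (x ++ y) = mwtI iw Δ x q + mwtF Δ fw y q →
      wtIF iw Δ fw (x ++ y) ≠ ⊤ →
      wtIF iw Δ fw (x0 ++ y0) = mwtI iw Δ x0 q + mwtF Δ fw y0 q →
      wtIF iw Δ fw (x0 ++ y0) ≠ ⊤ →
      mwtI iw' Δ' x (d x) + mwtI iw Δ x0 q ≤ mwtI iw Δ x q + mwtI iw' Δ' x0 (d x0) := by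
    intro x y x0 y0 q hdd hopt hfin hopt0 hfin0
    -- finiteness on the (x, y) side
    have hne : mwtI iw Δ x q + mwtF Δ fw y q ≠ ⊤ := hopt ▸ hfin
    obtain ⟨haI, -⟩ := WithTop.add_ne_top.mp hne
    obtain ⟨a, ha⟩ := zinf_ne_top_exists haI
    have hD2x := hD2 x y
    have hne' : mwtI iw' Δ' x (d x) + mwtF Δ' fw' y (d x) ≠ ⊤ := hD2x ▸ hfin
    obtain ⟨heI, -⟩ := WithTop.add_ne_top.mp hne'
    obtain ⟨e, he⟩ := zinf_ne_top_exists heI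
    -- finiteness on the (x0, y0) side
    have hne0 : mwtI iw Δ x0 q + mwtF Δ fw y0 q ≠ ⊤ := hopt0 ▸ hfin0
    obtain ⟨haI0, hcF0⟩ := WithTop.add_ne_top.mp hne0
    obtain ⟨a0, ha0⟩ := zinf_ne_top_exists haI0
    obtain ⟨c, hc⟩ := zinf_ne_top_exists hcF0
    have hD2x0 := hD2 x0 y0
    have hne0' : mwtI iw' Δ' x0 (d x0) + mwtF Δ' fw' y0 (d x0) ≠ ⊤ := hD2x0 ▸ hfin0
    obtain ⟨heI0, hcF0'⟩ := WithTop.add_ne_top.mp hne0'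
    obtain ⟨e0, he0⟩ := zinf_ne_top_exists heI0
    obtain ⟨c', hc'⟩ := zinf_ne_top_exists hcF0'
    -- (a) : a + c ≥ e + c'
    have hA : (↑e : ZInf) + ↑c' ≤ ↑a + ↑c := by
      calc (↑e : ZInf) + ↑c'
          = mwtI iw' Δ' x (d x) + mwtF Δ' fw' y0 (d x) := by rw [he, ← hdd, ← hc']
        _ = wtIF iw Δ fw (x ++ y0) := (hD2 x y0).symm
        _ ≤ mwtI iw Δ x q + mwtF Δ fw y0 q := wtIF_le_split iw Δ fw x y0 q
        _ = ↑a + ↑c := by rw [ha, hc]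
    -- (b) : a0 + c = e0 + c'
    have hBq : (↑a0 : ZInf) + ↑c = ↑e0 + ↑c' := by
      rw [← ha0, ← hc, ← he0, ← hc', ← hopt0, hD2x0]
    rw [ha, he, ha0, he0, ← WithTop.coe_add, ← WithTop.coe_add]
    rw [← WithTop.coe_add, ← WithTop.coe_add] at hA hBq
    have hA' : e + c' ≤ a + c := by exact_mod_cast hA
    have hB' : a0 + c = e0 + c' := by exact_mod_cast hBq
    rw [WithTop.coe_le_coe]
    omega
  -- the compatibility predicate and the per-pair bound
  set P : Q' × Q → Prop := fun dq => ∃ x y : List A, d x = dq.1 ∧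
      wtIF iw Δ fw (x ++ y) = mwtI iw Δ x dq.2 + mwtF Δ fw y dq.2 ∧
      wtIF iw Δ fw (x ++ y) ≠ ⊤ with hPdef
  classical
  set f : Q' × Q → ℤ := fun dq =>
    if h : P dq then
      M + WithTop.untopD 0 (mwtI iw Δ h.choose dq.2) - WithTop.untopD 0 (mwtI iw' Δ' h.choose (d h.choose))
        - WithTop.untopD 0 (L dq.1)
    else 0 with hfdef
  refine ⟨(Finset.univ.sup' Finset.univ_nonempty f).toNat, ?_⟩
  rintro x q ⟨y, hopt, hfin⟩
  have hP : P (d x, q) := ⟨x, y, rfl, hopt, hfin⟩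
  obtain ⟨y0, hdx0, hopt0, hfin0⟩ := hP.choose_spec
  set x0 := hP.choose with hx0def
  -- integers for the (x, y) side
  have hne : mwtI iw Δ x q + mwtF Δ fw y q ≠ ⊤ := hopt ▸ hfin
  obtain ⟨haI, -⟩ := WithTop.add_ne_top.mp hne
  obtain ⟨a, ha⟩ := zinf_ne_top_exists haI
  have hbI : mwtIall iw Δ x ≠ ⊤ :=
    ne_top_of_le_ne_top (ha ▸ WithTop.coe_ne_top) (mwtIall_le iw Δ x q)
  obtain ⟨b, hb⟩ := zinf_ne_top_exists hbI
  have hD2x := hD2 x y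
  have hne' : mwtI iw' Δ' x (d x) + mwtF Δ' fw' y (d x) ≠ ⊤ := hD2x ▸ hfin
  obtain ⟨heI, -⟩ := WithTop.add_ne_top.mp hne'
  obtain ⟨e, he⟩ := zinf_ne_top_exists heI
  -- integers for the (x0, y0) side
  have hne0 : mwtI iw Δ x0 q + mwtF Δ fw y0 q ≠ ⊤ := hopt0 ▸ hfin0
  obtain ⟨haI0, -⟩ := WithTop.add_ne_top.mp hne0
  obtain ⟨a0, ha0⟩ := zinf_ne_top_exists haI0
  have hD2x0 := hD2 x0 y0
  have hne0' : mwtI iw' Δ' x0 (d x0) + mwtF Δ' fw' y0 (d x0) ≠ ⊤ := hD2x0 ▸ hfin0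
  obtain ⟨heI0, -⟩ := WithTop.add_ne_top.mp hne0'
  obtain ⟨e0, he0⟩ := zinf_ne_top_exists heI0
  -- lower bound on mwtIall x via the deterministic automaton
  obtain ⟨qs, -, hqs⟩ := Finset.exists_mem_eq_inf Finset.univ Finset.univ_nonempty
    (fun r => mwtI iw Δ x r)
  have hwub : wtIF iw Δ fw (x ++ yfin qs) ≤ ↑(b + M) := by
    calc wtIF iw Δ fw (x ++ yfin qs)
        ≤ mwtI iw Δ x qs + mwtF Δ fw (yfin qs) qs := wtIF_le_split iw Δ fw x (yfin qs) qs
      _ ≤ mwtIall iw Δ x + ↑M := add_le_add (le_of_eq hqs.symm) (hM qs)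
      _ = ↑(b + M) := by rw [hb, ← WithTop.coe_add]
  have hstep2 : mwtI iw' Δ' x (d x) + L (d x) ≤ ↑(b + M) := by
    refine le_trans ?_ hwub
    rw [hD2 x (yfin qs)]
    exact add_le_add_right (Finset.inf_le (Finset.mem_univ qs)) _
  have hLI : L (d x) ≠ ⊤ := by
    intro hLt
    rw [hLt, add_top] at hstep2
    exact (WithTop.not_top_le_coe _) hstep2
  obtain ⟨l, hl⟩ := zinf_ne_top_exists hLI
  have hstep2' : e + l ≤ b + M := by
    rw [he, hl, ← WithTop.coe_add] at hstep2
    exact_mod_cast hstep2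
  -- exchange inequality
  have hdd : d x = d x0 := hdx0.symm
  have hx := hkey x0 y0 x y q hdd hopt0 hfin0 hopt hfin
  have hx' : e0 + a ≤ a0 + e := by
    rw [ha, he, ha0, he0, ← WithTop.coe_add, ← WithTop.coe_add] at hx
    exact_mod_cast hx
  -- compute f (d x, q)
  have hfval : f (d x, q) = M + a0 - e0 - l := by
    rw [hfdef]
    simp only
    rw [dif_pos hP, ← hx0def, ha0, he0, hl]
    simp [WithTop.untopD_coe]
  have hfle : f (d x, q) ≤ ((Finset.univ.sup' Finset.univ_nonempty f).toNat : ℤ) :=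
    le_trans (Finset.le_sup' f (Finset.mem_univ (d x, q))) (Int.self_le_toNat _)
  rw [ha, hb]
  have : a ≤ b + ((Finset.univ.sup' Finset.univ_nonempty f).toNat : ℤ) := by omega
  exact_mod_cast this

end Forward

/-- **Characterization of determinizability of trim WFAs with initial and final weights.**
A trim WFA_if over a finite alphabet is determinizable iff there is a bound `B` such that
for every word `x` and state `q`, if for some suffix `y` the value of `x⬝y` is attained
(finitely) by a run passing through `q` after `x`, then
`mwt⁺ⁱ(x, Q₀ → q) − mwt⁺ⁱ(x, Q₀ → Q) ≤ B`. -/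
theorem trim_wfaif_determinizable_iff_bounded_gap {Q A : Type*} [Fintype Q] [Fintype A]
    (iw : Q → ZInf) (Δ : Q → A → Q → ZInf) (fw : Q → ZInf)
    (htrim : TrimIF iw Δ fw) :
    DeterminizableIF iw Δ fw ↔
      ∃ B : ℕ, ∀ (x : List A) (q : Q),
        (∃ y : List A,
            wtIF iw Δ fw (x ++ y) = mwtI iw Δ x q + mwtF Δ fw y q ∧
            wtIF iw Δ fw (x ++ y) ≠ ⊤) →
        mwtI iw Δ x q ≤ mwtIall iw Δ x + (B : ZInf) := by
  constructor
  · rintro ⟨Q', inst, iw', Δ', fw', hdet, hval⟩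
    exact forward_direction iw Δ fw htrim iw' Δ' fw' hdet hval
  · rintro ⟨B, hB⟩
    exact backward_direction iw Δ fw B hB
end

section
/- Let A ∈ ℤ∞^{S×S} be a stable-cycle matrix. Then for all n,m ≥ 1: TthPairs(A^{m·𝔫}) ⊆ TthPairs(A^𝔪) = TthPairs(A^{𝔪·n}); moreover, for every (s,r) ∈ TthPairs(A^{m·𝔫}) one has (A^{m·𝔫})_{s,r} ≥ (A^𝔪)_{s,r} = (A^{n·𝔪})_{s,r}. -/
/-- `𝔫 = |S|!`. -/
def nfac (S : Type*) [Fintype S] : ℕ := (Fintype.card S).factorial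

/-- `𝔪 = |S| ⬝ 𝔫`. -/
def mfac (S : Type*) [Fintype S] : ℕ := Fintype.card S * nfac S

/-- The `(s, r)` entry of a min-plus matrix, as an element of `ℤ∞`.
Matrices over `Tropical ZInf` are multiplied in the min-plus (tropical) semiring:
`(A * B) s r = min_t (A s t + B t r)`, and `A ^ n` is the `n`-fold min-plus power. -/
def en {S : Type*} (A : Matrix S S (Tropical ZInf)) (s r : S) : ZInf :=
  (A s r).untrop

/-- `A` is a stable-cycle matrix with baseline `s₀`: for every `n ≥ 1`, `(A^n)_{s₀,s₀} = 0`
and `(A^n)_{r,r} ≥ 0` for every `r`. -/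
def IsStableCycle {S : Type*} [Fintype S] [DecidableEq S]
    (A : Matrix S S (Tropical ZInf)) (s₀ : S) : Prop :=
  ∀ n : ℕ, 1 ≤ n → en (A ^ n) s₀ s₀ = 0 ∧ ∀ r : S, 0 ≤ en (A ^ n) r r

/-- `MinStates B = {r : B_{r,r} = 0}`. -/
def MinStates {S : Type*} (B : Matrix S S (Tropical ZInf)) : Set S :=
  {r | en B r r = 0}

/-- The tethered pairs of `B`: `(s, r)` with `s ∈ MinStates B` and `B_{s,r} < ∞`. -/
def TthPairs {S : Type*} (B : Matrix S S (Tropical ZInf)) : Set (S × S) :=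
  {p | p.1 ∈ MinStates B ∧ en B p.1 p.2 < ⊤}

set_option linter.unusedSectionVars false

section Aux
variable {S : Type*} [Fintype S] [DecidableEq S]

lemma en_mul_eq (A B : Matrix S S (Tropical ZInf)) (s r : S) :
    en (A * B) s r = Finset.univ.inf (fun t => en A s t + en B t r) := by
  rw [en, Matrix.mul_apply, Finset.untrop_sum']
  exact Finset.inf_congr rfl (fun t _ => by simp [Function.comp, en, Tropical.untrop_mul])

lemma en_mul_le (A B : Matrix S S (Tropical ZInf)) (s r t : S) :
    en (A * B) s r ≤ en A s t + en B t r := by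
  rw [en_mul_eq]; exact Finset.inf_le (Finset.mem_univ t)

lemma en_mul_exists (A B : Matrix S S (Tropical ZInf)) (s r : S) :
    ∃ t, en (A * B) s r = en A s t + en B t r := by
  have : Nonempty S := ⟨s⟩
  obtain ⟨t, -, ht⟩ := Finset.exists_mem_eq_inf Finset.univ Finset.univ_nonempty
    (fun t => en A s t + en B t r)
  exact ⟨t, (en_mul_eq A B s r).trans ht⟩

lemma en_pow_add_le (A : Matrix S S (Tropical ZInf)) (a b : ℕ) (s t r : S) :
    en (A ^ (a + b)) s r ≤ en (A ^ a) s t + en (A ^ b) t r := by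
  rw [pow_add]; exact en_mul_le _ _ _ _ _

lemma en_one_diag (s : S) : en (1 : Matrix S S (Tropical ZInf)) s s = 0 := by
  simp [en, Matrix.one_apply_eq]

/-- weight of a length-`n` walk along `f` -/
def wt (A : Matrix S S (Tropical ZInf)) (f : ℕ → S) (n : ℕ) : ZInf :=
  ∑ i ∈ Finset.range n, en A (f i) (f (i + 1))

lemma wt_succ (A : Matrix S S (Tropical ZInf)) (f : ℕ → S) (n : ℕ) :
    wt A f (n + 1) = wt A f n + en A (f n) (f (n + 1)) :=
  Finset.sum_range_succ _ _

lemma wt_concat (A : Matrix S S (Tropical ZInf)) (f : ℕ → S) (a b : ℕ) :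
    wt A f (a + b) = wt A f a + wt A (fun k => f (k + a)) b := by
  induction b with
  | zero => simp [wt]
  | succ b ih =>
      have e : a + (b + 1) = (a + b) + 1 := by omega
      rw [e]
      simp only [wt_succ]
      rw [ih]
      have e1 : b + a = a + b := by omega
      have e2 : b + 1 + a = a + b + 1 := by omega
      rw [e1, e2, add_assoc]

lemma wt_lower (A : Matrix S S (Tropical ZInf)) :
    ∀ (n : ℕ) (f : ℕ → S), en (A ^ n) (f 0) (f n) ≤ wt A f n := by
  intro n
  induction n with
  | zero => intro f; simp [wt, pow_zero, en_one_diag]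
  | succ n ih =>
      intro f
      have h1 := en_pow_add_le A 1 n (f 0) (f 1) (f (n + 1))
      rw [show 1 + n = n + 1 by omega] at h1
      have h2 := ih (fun k => f (k + 1))
      have h3 : wt A f (n + 1) = wt A f 1 + wt A (fun k => f (k + 1)) n := by
        have : n + 1 = 1 + n := by omega
        rw [this, wt_concat]
      have h4 : wt A f 1 = en A (f 0) (f 1) := by simp [wt]
      rw [h3, h4]
      simp only [pow_one] at h1
      exact h1.trans (add_le_add le_rfl h2)

lemma wt_attain (A : Matrix S S (Tropical ZInf)) :
    ∀ (n : ℕ) (s r : S), ∃ f : ℕ → S, f 0 = s ∧ f (n + 1) = r ∧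
      wt A f (n + 1) ≤ en (A ^ (n + 1)) s r := by
  intro n
  induction n with
  | zero =>
      intro s r
      refine ⟨fun i => if i = 0 then s else r, by simp, by simp, ?_⟩
      simp [wt, pow_one, en]
  | succ n ih =>
      intro s r
      have hms : A ^ (n + 2) = A * A ^ (n + 1) := by rw [← pow_succ']
      obtain ⟨t, hts⟩ : ∃ t, en (A ^ (n + 2)) s r = en A s t + en (A ^ (n + 1)) t r := by
        rw [hms]; exact en_mul_exists _ _ _ _
      obtain ⟨f', hf'0, hf'n, hf'w⟩ := ih t r
      refine ⟨fun i => if i = 0 then s else f' (i - 1), by simp, by simp [hf'n], ?_⟩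
      set f : ℕ → S := fun i => if i = 0 then s else f' (i - 1) with hf
      have hshift : (fun k => f (k + 1)) = f' := by
        funext k; simp [hf]
      have h3 : wt A f (n + 2) = wt A f 1 + wt A f' (n + 1) := by
        have e : n + 2 = 1 + (n + 1) := by omega
        rw [e, wt_concat, hshift]
      have h4 : wt A f 1 = en A s (f' 0) := by simp [wt, hf]
      rw [h3, h4, hts, hf'0]
      exact add_le_add le_rfl hf'w

end Aux

section Surg
variable {S : Type*} [Fintype S] [DecidableEq S]

lemma surgery (A : Matrix S S (Tropical ZInf))
    (hdiag : ∀ k, 1 ≤ k → ∀ v : S, 0 ≤ en (A ^ k) v v) :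
    ∀ n, 1 ≤ n → ∀ s r : S,
      ∃ u, 1 ≤ u ∧ u ≤ Fintype.card S ∧ en (A ^ u) s r ≤ en (A ^ n) s r := by
  intro n
  induction n using Nat.strong_induction_on with
  | _ n IH =>
  intro hn s r
  by_cases hle : n ≤ Fintype.card S
  · exact ⟨n, hn, hle, le_rfl⟩
  · push_neg at hle
    obtain ⟨k, rfl⟩ : ∃ k, n = k + 1 := ⟨n - 1, by omega⟩
    obtain ⟨f, hf0, hfn, hwt⟩ := wt_attain A k s r
    -- pigeonhole on positions 0..k
    obtain ⟨a, b, hab, hfab⟩ := Fintype.exists_ne_map_eq_of_card_lt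
      (fun x : Fin (k + 1) => f x.val) (by simpa using hle)
    -- wlog a < b
    obtain ⟨i, j, hij, hjk, hfe⟩ : ∃ i j : ℕ, i < j ∧ j ≤ k ∧ f i = f j := by
      rcases lt_or_gt_of_ne hab with h | h
      · exact ⟨a.val, b.val, h, by omega, hfab⟩
      · exact ⟨b.val, a.val, h, by omega, hfab.symm⟩
    set n' := i + (k + 1 - j) with hn'
    have hn'1 : 1 ≤ n' := by omega
    have hn'lt : n' < k + 1 := by omega
    -- main chain
    have h1 : en (A ^ n') s r ≤ en (A ^ i) s (f i) + en (A ^ (k + 1 - j)) (f j) r := by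
      rw [hn', hfe]
      exact en_pow_add_le A i (k + 1 - j) s (f j) r
    have h2 : en (A ^ i) s (f i) ≤ wt A f i := by
      have := wt_lower A i f
      rwa [hf0] at this
    have h3 : en (A ^ (k + 1 - j)) (f j) r ≤ wt A (fun t => f (t + j)) (k + 1 - j) := by
      have := wt_lower A (k + 1 - j) (fun t => f (t + j))
      simp only [Nat.zero_add] at this
      rwa [show k + 1 - j + j = k + 1 by omega, hfn] at this
    have h4 : (0 : ZInf) ≤ wt A (fun t => f (t + i)) (j - i) := by
      have hl := wt_lower A (j - i) (fun t => f (t + i))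
      simp only [Nat.zero_add] at hl
      rw [show j - i + i = j by omega, ← hfe] at hl
      exact le_trans (hdiag (j - i) (by omega) (f i)) hl
    have h5 : wt A f (k + 1) =
        wt A f i + wt A (fun t => f (t + i)) (j - i) + wt A (fun t => f (t + j)) (k + 1 - j) := by
      have c1 := wt_concat A f i (k + 1 - i)
      have c2 := wt_concat A (fun t => f (t + i)) (j - i) (k + 1 - j)
      have hfg : (fun t => (fun t' => f (t' + i)) (t + (j - i))) = fun t => f (t + j) := by
        funext t
        have e : t + (j - i) + i = t + j := by omega
        simp only [e]
      rw [hfg] at c2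
      rw [show i + (k + 1 - i) = k + 1 from by omega] at c1
      rw [show (j - i) + (k + 1 - j) = k + 1 - i from by omega] at c2
      rw [c1, c2, ← add_assoc]
    have h6 : en (A ^ n') s r ≤ en (A ^ (k + 1)) s r := by
      refine le_trans h1 (le_trans (add_le_add h2 h3) ?_)
      refine le_trans ?_ (le_trans h5.symm.le hwt)
      calc wt A f i + wt A (fun t => f (t + j)) (k + 1 - j)
          ≤ (wt A f i + wt A (fun t => f (t + i)) (j - i)) + wt A (fun t => f (t + j)) (k + 1 - j) := by
            exact add_le_add (le_add_of_nonneg_right h4) le_rfl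
        _ = _ := rfl
    obtain ⟨u, hu1, huc, hu⟩ := IH n' hn'lt hn'1 s r
    exact ⟨u, hu1, huc, hu.trans h6⟩

end Surg

section Main
variable {S : Type*} [Fintype S] [DecidableEq S]

lemma en_pump (A : Matrix S S (Tropical ZInf)) (s : S) (u : ℕ) (h : en (A ^ u) s s ≤ 0) :
    ∀ t : ℕ, en (A ^ (u * t)) s s ≤ 0 := by
  intro t
  induction t with
  | zero => simp [en_one_diag]
  | succ t ih =>
      have e : u * (t + 1) = u * t + u := by ring
      rw [e]
      exact le_trans (en_pow_add_le A (u * t) u s s s) (add_nonpos ih h)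

end Main

/-- Stabilization of tethered pairs of a stable cycle. -/
theorem tthPairs_stabilize {S : Type*} [Fintype S] [DecidableEq S]
    (A : Matrix S S (Tropical ZInf)) (s₀ : S) (hA : IsStableCycle A s₀)
    (n m : ℕ) (hn : 1 ≤ n) (hm : 1 ≤ m) :
    TthPairs (A ^ (m * nfac S)) ⊆ TthPairs (A ^ mfac S) ∧
    TthPairs (A ^ mfac S) = TthPairs (A ^ (mfac S * n)) ∧
    ∀ p ∈ TthPairs (A ^ (m * nfac S)),
      en (A ^ mfac S) p.1 p.2 ≤ en (A ^ (m * nfac S)) p.1 p.2 ∧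
      en (A ^ mfac S) p.1 p.2 = en (A ^ (n * mfac S)) p.1 p.2 := by
  have hNe : Nonempty S := ⟨s₀⟩
  have hc1 : 1 ≤ Fintype.card S := Fintype.card_pos
  have hnf : 1 ≤ nfac S := Nat.factorial_pos _
  have hdiag : ∀ k, 1 ≤ k → ∀ v : S, 0 ≤ en (A ^ k) v v := fun k hk v => (hA k hk).2 v
  have e1 : Fintype.card S * nfac S = mfac S := rfl
  have e2 : ∀ j : ℕ, (Fintype.card S * j) * nfac S = mfac S * j := fun j => by
    rw [← e1]; ring
  -- zero cycle propagation
  have hzero : ∀ s : S, ∀ k, 1 ≤ k → en (A ^ (k * nfac S)) s s = 0 →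
      ∀ j, 1 ≤ j → en (A ^ (j * nfac S)) s s = 0 := by
    intro s k hk h j hj
    obtain ⟨u, hu1, huc, hu⟩ := surgery A hdiag (k * nfac S) (Nat.mul_pos hk hnf) s s
    rw [h] at hu
    obtain ⟨q, hq⟩ : u ∣ nfac S := Nat.dvd_factorial hu1 huc
    have hp := en_pump A s u hu (q * j)
    have he : u * (q * j) = j * nfac S := by rw [hq]; ring
    rw [he] at hp
    exact le_antisymm hp (hdiag _ (Nat.mul_pos hj hnf) s)
  -- core inequality
  have hcore : ∀ s r : S, (∀ j, 1 ≤ j → en (A ^ (j * nfac S)) s s = 0) →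
      ∀ t, 1 ≤ t → en (A ^ mfac S) s r ≤ en (A ^ (t * nfac S)) s r := by
    intro s r hz t ht
    have hdB : ∀ k, 1 ≤ k → ∀ v : S, 0 ≤ en ((A ^ nfac S) ^ k) v v := by
      intro k hk v
      rw [← pow_mul]
      exact hdiag (nfac S * k) (Nat.mul_pos hnf hk) v
    obtain ⟨u, hu1, huc, hu⟩ := surgery (A ^ nfac S) hdB t ht s r
    have hss : en ((A ^ nfac S) ^ (Fintype.card S - u)) s s = 0 := by
      rcases Nat.eq_zero_or_pos (Fintype.card S - u) with h0 | hpos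
      · rw [h0, pow_zero]; exact en_one_diag s
      · rw [← pow_mul, show nfac S * (Fintype.card S - u) = (Fintype.card S - u) * nfac S from
          mul_comm _ _]
        exact hz _ hpos
    have hpad := en_pow_add_le (A ^ nfac S) (Fintype.card S - u) u s s r
    rw [show Fintype.card S - u + u = Fintype.card S from by omega, hss, zero_add] at hpad
    have eM : A ^ mfac S = (A ^ nfac S) ^ Fintype.card S := by
      rw [← pow_mul, mul_comm, e1]
    have eT : A ^ (t * nfac S) = (A ^ nfac S) ^ t := by rw [← pow_mul, mul_comm]
    rw [eM, eT]
    exact le_trans hpad hu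
  -- padding
  have hpadm : ∀ s r : S, ∀ d b : ℕ, en (A ^ d) s s = 0 →
      en (A ^ (d + b)) s r ≤ en (A ^ b) s r := by
    intro s r d b h
    have := en_pow_add_le A d b s s r
    rwa [h, zero_add] at this
  refine ⟨?_, ?_, ?_⟩
  · -- part 1
    rintro ⟨s, r⟩ ⟨h1, h2⟩
    have hz := hzero s m hm h1
    refine ⟨?_, ?_⟩
    · show en (A ^ mfac S) s s = 0
      rw [← e1]
      exact hz _ hc1
    · exact lt_of_le_of_lt (hcore s r hz m hm) h2
  · -- part 2
    apply Set.Subset.antisymm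
    · rintro ⟨s, r⟩ ⟨h1, h2⟩
      have h1' : en (A ^ (Fintype.card S * nfac S)) s s = 0 := by rw [e1]; exact h1
      have hz := hzero s (Fintype.card S) hc1 (by rwa [mul_comm] at h1' )
      refine ⟨?_, ?_⟩
      · show en (A ^ (mfac S * n)) s s = 0
        rw [← e2 n]
        exact hz _ (Nat.mul_pos hc1 hn)
      · show en (A ^ (mfac S * n)) s r < ⊤
        have hd0 : en (A ^ (mfac S * (n - 1))) s s = 0 := by
          rcases Nat.eq_zero_or_pos (n - 1) with h0 | hpos
          · rw [h0, Nat.mul_zero, pow_zero]; exact en_one_diag s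
          · rw [← e2 (n - 1)]
            exact hz _ (Nat.mul_pos hc1 hpos)
        have hle := hpadm s r (mfac S * (n - 1)) (mfac S) hd0
        rw [show mfac S * (n - 1) + mfac S = mfac S * n from by
          rw [← Nat.mul_succ]; congr 1; omega] at hle
        exact lt_of_le_of_lt hle h2
    · rintro ⟨s, r⟩ ⟨h1, h2⟩
      have h1' : en (A ^ ((Fintype.card S * n) * nfac S)) s s = 0 := by
        rw [e2 n]; exact h1
      have hz := hzero s (Fintype.card S * n) (Nat.mul_pos hc1 hn) h1'
      refine ⟨?_, ?_⟩
      · show en (A ^ mfac S) s s = 0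
        rw [← e1]
        exact hz _ hc1
      · show en (A ^ mfac S) s r < ⊤
        have := hcore s r hz (Fintype.card S * n) (Nat.mul_pos hc1 hn)
        rw [e2 n] at this
        exact lt_of_le_of_lt this h2
  · -- part 3
    rintro ⟨s, r⟩ ⟨h1, h2⟩
    have hz := hzero s m hm h1
    refine ⟨hcore s r hz m hm, le_antisymm ?_ ?_⟩
    · have := hcore s r hz (Fintype.card S * n) (Nat.mul_pos hc1 hn)
      rw [show (Fintype.card S * n) * nfac S = n * mfac S from by rw [← e1]; ring] at this
      exact this
    · have hd0 : en (A ^ ((n - 1) * mfac S)) s s = 0 := by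
        rcases Nat.eq_zero_or_pos (n - 1) with h0 | hpos
        · rw [h0, Nat.zero_mul, pow_zero]; exact en_one_diag s
        · rw [show (n - 1) * mfac S = ((n - 1) * Fintype.card S) * nfac S from by
            rw [← e1]; ring]
          exact hz _ (Nat.mul_pos hpos hc1)
      have hle := hpadm s r ((n - 1) * mfac S) (mfac S) hd0
      rw [show (n - 1) * mfac S + mfac S = n * mfac S from by
        rw [← Nat.succ_mul]; congr 1; omega] at hle
      exact hle
end
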